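/- arXiv:1906.07355 — 2 statements merged into one kernel-verified Lean document; each statement's English description precedes it below -/
import Mathlib

section
/- Let ψ, φ : ℕ → ℝ be nonnegative sequences with φ_0 = 0, and let η, γ, μ > 0. Suppose for all t that ψ_{t+1} ≥ (1 + ηγ) ψ_t − μ √(ψ_t² + φ_t²) and φ_{t+1} ≤ (1 + ηγ) φ_t + μ √(ψ_t² + φ_t²). Fix T with 4 μ T ≤ 1 and ψ_0 > 0. Then for all t ≤ T, φ_t ≤ 4 μ t ψ_t. -/
/-!
Induction on `t`. While `4μt ≤ 1` the invariant `φ_t ≤ 4μt ψ_t` gives `φ_t ≤ ψ_t`, so the coupling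
term `μ√(ψ_t² + φ_t²)` is at most `2μψ_t`. Multiplying the lower recursion for `ψ` by `4μ(t+1) ≤ 1`
and comparing with the upper recursion for `φ`, the growth factor `1 + ηγ ≥ 1` contributes an extra
`4μψ_t` to the right-hand side, which pays for the coupling term appearing in both recursions.
-/

lemma Real.sqrt_sq_add_sq_le_two_mul {x y : ℝ} (hy : 0 ≤ y) (hyx : y ≤ x) :
    √(x ^ 2 + y ^ 2) ≤ 2 * x :=
  (Real.sqrt_le_left (by linarith)).2 (by nlinarith)

lemma le_mul_succ_of_coupled_recursion {a μ k ψ φ ψ' φ' : ℝ} (ha : 1 ≤ a) (hμ : 0 ≤ μ) (hk : 0 ≤ k)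
    (hψ : 0 ≤ ψ) (hφ : 0 ≤ φ) (hk1 : 4 * μ * (k + 1) ≤ 1) (hinv : φ ≤ 4 * μ * k * ψ)
    (hψ' : a * ψ - μ * √(ψ ^ 2 + φ ^ 2) ≤ ψ')
    (hφ' : φ' ≤ a * φ + μ * √(ψ ^ 2 + φ ^ 2)) :
    φ' ≤ 4 * μ * (k + 1) * ψ' := by
  set s := √(ψ ^ 2 + φ ^ 2)
  have hφψ : φ ≤ ψ := hinv.trans (by nlinarith)
  have hs : μ * s ≤ 2 * μ * ψ := by
    nlinarith [Real.sqrt_sq_add_sq_le_two_mul hφ hφψ]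
  have hs0 : 0 ≤ μ * s := by positivity
  calc φ' ≤ a * φ + μ * s := hφ'
    _ ≤ a * (4 * μ * k * ψ) + μ * s := by gcongr
    _ ≤ 4 * μ * (k + 1) * (a * ψ - μ * s) := by
      have hc : 0 ≤ 4 * μ * (k + 1) := by positivity
      nlinarith [mul_nonneg hs0 hc]
    _ ≤ 4 * μ * (k + 1) * ψ' := by gcongr

theorem stmt_3_general (ψ φ : ℕ → ℝ) (η γ μ : ℝ) (T : ℕ)
    (hψ : ∀ t, 0 ≤ ψ t) (hφ : ∀ t, 0 ≤ φ t)
    (hφ0 : φ 0 = 0)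
    (hη : 0 < η) (hγ : 0 < γ) (hμ : 0 < μ)
    (hrec1 : ∀ t < T, ψ (t + 1) ≥ (1 + η * γ) * ψ t - μ * Real.sqrt (ψ t ^ 2 + φ t ^ 2))
    (hrec2 : ∀ t < T, φ (t + 1) ≤ (1 + η * γ) * φ t + μ * Real.sqrt (ψ t ^ 2 + φ t ^ 2))
    (hT : ∀ t < T, 4 * μ * (t + 1 : ℝ) ≤ 1) :
    ∀ t ≤ T, φ t ≤ 4 * μ * t * ψ t := by
  have ha : 1 ≤ 1 + η * γ := by nlinarith [mul_pos hη hγ]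
  intro t htT
  induction t with
  | zero => simp [hφ0]
  | succ t ih =>
    push_cast
    exact le_mul_succ_of_coupled_recursion ha hμ.le t.cast_nonneg (hψ t) (hφ t) (hT t htT)
      (ih (Nat.le_of_succ_le htT)) (hrec1 t htT) (hrec2 t htT)

theorem stmt_3 (ψ φ : ℕ → ℝ) (η γ μ : ℝ) (T : ℕ)
    (hψ : ∀ t, 0 ≤ ψ t) (hφ : ∀ t, 0 ≤ φ t)
    (hφ0 : φ 0 = 0) (hψ0 : 0 < ψ 0)
    (hη : 0 < η) (hγ : 0 < γ) (hμ : 0 < μ)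
    (hrec1 : ∀ t < T, ψ (t + 1) ≥ (1 + η * γ) * ψ t - μ * Real.sqrt (ψ t ^ 2 + φ t ^ 2))
    (hrec2 : ∀ t < T, φ (t + 1) ≤ (1 + η * γ) * φ t + μ * Real.sqrt (ψ t ^ 2 + φ t ^ 2))
    (hT : ∀ t < T, 4 * μ * (t + 1 : ℝ) ≤ 1) :
    ∀ t ≤ T, φ t ≤ 4 * μ * t * ψ t :=
  stmt_3_general ψ φ η γ μ T hψ hφ hφ0 hη hγ hμ hrec1 hrec2 hT
end

section
/- Let f : ℝ^d → ℝ be twice differentiable with ρ-Lipschitz Hessian and β-Lipschitz gradient. Fix x and define for any point u the gradient step u⁺ = u − η∇f(u). Then for all u, w: ‖(w⁺ − u⁺) − (I − η∇²f(x))(w − u)‖ ≤ η ρ ‖w − u‖ (‖w − u‖ + ‖u − x‖). -/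
/-!
Mean value inequality on the segment `[u, w]` for `∇f - ∇²f(x)`, whose derivative
`∇²f(v) - ∇²f(x)` has norm at most `ρ‖v - x‖ ≤ ρ(‖w - u‖ + ‖u - x‖)` there.
-/

theorem norm_sub_le_norm_sub_of_mem_segment {E : Type*} [SeminormedAddCommGroup E]
    [NormedSpace ℝ E] {u v w : E} (hv : v ∈ segment ℝ u w) : ‖v - u‖ ≤ ‖w - u‖ := by
  rw [← dist_eq_norm, ← dist_eq_norm, dist_comm v, dist_comm w]
  linarith [dist_add_dist_of_mem_segment hv, dist_nonneg (x := v) (y := w)]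

theorem norm_sub_sub_fderiv_le_of_lipschitz_fderiv {E G : Type*} [NormedAddCommGroup E]
    [NormedSpace ℝ E] [NormedAddCommGroup G] [NormedSpace ℝ G] {F : E → G} {ρ : ℝ}
    (hρ : 0 ≤ ρ) (hF : Differentiable ℝ F)
    (hlip : ∀ x y, ‖fderiv ℝ F x - fderiv ℝ F y‖ ≤ ρ * ‖x - y‖) (x u w : E) :
    ‖F w - F u - fderiv ℝ F x (w - u)‖ ≤ ρ * (‖w - u‖ + ‖u - x‖) * ‖w - u‖ := by
  refine (convex_segment u w).norm_image_sub_le_of_norm_fderiv_le' (fun v _ => hF v)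
    (fun v hv => ?_) (left_mem_segment ℝ u w) (right_mem_segment ℝ u w)
  calc ‖fderiv ℝ F v - fderiv ℝ F x‖ ≤ ρ * ‖v - x‖ := hlip v x
    _ ≤ ρ * (‖v - u‖ + ‖u - x‖) := by gcongr; exact norm_sub_le_norm_sub_add_norm_sub v u x
    _ ≤ ρ * (‖w - u‖ + ‖u - x‖) := by gcongr; exact norm_sub_le_norm_sub_of_mem_segment hv

theorem stmt_9_general (d : ℕ) (f : EuclideanSpace ℝ (Fin d) → ℝ) (ρ η : ℝ)
    (hρ : 0 ≤ ρ) (hη : 0 < η)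
    (hdiff2 : Differentiable ℝ (gradient f))
    (hlipH : ∀ x y, ‖fderiv ℝ (gradient f) x - fderiv ℝ (gradient f) y‖ ≤ ρ * ‖x - y‖)
    (x : EuclideanSpace ℝ (Fin d)) :
    ∀ u w, ‖((w - η • gradient f w) - (u - η • gradient f u)) -
        ((w - u) - η • fderiv ℝ (gradient f) x (w - u))‖ ≤
      η * ρ * ‖w - u‖ * (‖w - u‖ + ‖u - x‖) := by
  intro u w
  set r := gradient f w - gradient f u - fderiv ℝ (gradient f) x (w - u)
  calc _ = ‖-(η • r)‖ := by congr 1; module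
    _ = η * ‖r‖ := by rw [norm_neg, norm_smul, Real.norm_of_nonneg hη.le]
    _ ≤ η * (ρ * (‖w - u‖ + ‖u - x‖) * ‖w - u‖) := by
        gcongr; exact norm_sub_sub_fderiv_le_of_lipschitz_fderiv hρ hdiff2 hlipH x u w
    _ = η * ρ * ‖w - u‖ * (‖w - u‖ + ‖u - x‖) := by ring

theorem stmt_9 (d : ℕ) (f : EuclideanSpace ℝ (Fin d) → ℝ) (ρ β η : ℝ)
    (hρ : 0 ≤ ρ) (hβ : 0 ≤ β) (hη : 0 < η)
    (hdiff : Differentiable ℝ f)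
    (hdiff2 : Differentiable ℝ (gradient f))
    (hlipH : ∀ x y, ‖fderiv ℝ (gradient f) x - fderiv ℝ (gradient f) y‖ ≤ ρ * ‖x - y‖)
    (hlipG : ∀ x y, ‖gradient f x - gradient f y‖ ≤ β * ‖x - y‖)
    (x : EuclideanSpace ℝ (Fin d)) :
    ∀ u w, ‖((w - η • gradient f w) - (u - η • gradient f u)) -
        ((w - u) - η • fderiv ℝ (gradient f) x (w - u))‖ ≤
      η * ρ * ‖w - u‖ * (‖w - u‖ + ‖u - x‖) :=
  stmt_9_general d f ρ η hρ hη hdiff2 hlipH x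
end
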